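/- Let G=(V,E) be a finite simple graph with boundary set ∂V ⊆ V such that every diagonal entry of D is strictly positive and such that vol(S) > 0 for every nonempty S ⊆ V. Then λ_R ≥ h_R²/2, i.e. the first nontrivial eigenvalue of the normalized reflected Neumann graph Laplacian is at least half the square of the Cheeger constant h_R. -/

import Mathlib

/-!
The matrix `w = Q R` is symmetric: it is the adjacency matrix with weight `1/2` on edges joining
two boundary vertices. Its row sums are the entries of `Q D`, `Q L_R = diag(Q D) - w`, and
`m(S, V∖S)` and `vol S` are the cut and the volume of `S` for the weight `w`. Substituting
`x = D^{1/2} Q^{1/2} f` therefore turns the Rayleigh quotient defining `λ_R` into the Dirichlet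
quotient `Σ_{u,v} w_{uv} (f_u - f_v)² / (2 Σ_v (QD)_v f_v²)` over `f` with `Σ_v (QD)_v f_v = 0`,
and the theorem becomes the Cheeger inequality for an arbitrary symmetric nonnegative weight.

That is proved in the classical way: shift `f` by a weighted median `c` and split `f - c` into its
positive and negative parts, each supported on at most half of the volume. For such a `g ≥ 0`,
with `μ = Q D`, the co-area inequality gives `2 h Σ μ g² ≤ Σ w |g_u² - g_v²|`, and Cauchy–Schwarz
bounds the right side by `(Σ w (g_u - g_v)²)^{1/2} (4 Σ μ g²)^{1/2}`.
-/

open Matrix Finset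

namespace RN

variable {V : Type*}

/-- The adjacency matrix of `G` with real entries. -/
noncomputable def adjMat [Fintype V] [DecidableEq V] (G : SimpleGraph V) [DecidableRel G.Adj] :
    Matrix V V ℝ :=
  Matrix.of fun u v => if G.Adj u v then 1 else 0

/-- The reflected adjacency matrix `R = [[A₁₁, A₁₂],[2A₁₂ᵀ, A₂₂]]`, where the first block is
indexed by the interior vertices and the second block by the boundary vertices `B`. -/
noncomputable def reflAdj [Fintype V] [DecidableEq V] (G : SimpleGraph V) [DecidableRel G.Adj]
    (B : Finset V) : Matrix V V ℝ :=
  Matrix.of fun u v => (if u ∈ B ∧ v ∉ B then 2 else 1) * adjMat G u v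

/-- The diagonal entries of `D = diag(R·1)`. -/
noncomputable def deg [Fintype V] [DecidableEq V] (G : SimpleGraph V) [DecidableRel G.Adj]
    (B : Finset V) (v : V) : ℝ :=
  ∑ w, reflAdj G B v w

/-- `D = diag(R·1)`. -/
noncomputable def Dmat [Fintype V] [DecidableEq V] (G : SimpleGraph V) [DecidableRel G.Adj]
    (B : Finset V) : Matrix V V ℝ :=
  Matrix.diagonal (deg G B)

/-- The reflected Neumann Laplacian `L_R = D - R`. -/
noncomputable def LR [Fintype V] [DecidableEq V] (G : SimpleGraph V) [DecidableRel G.Adj]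
    (B : Finset V) : Matrix V V ℝ :=
  Dmat G B - reflAdj G B

/-- The weight `q_v`, which is `1` on interior vertices and `1/2` on boundary vertices. -/
noncomputable def qw [DecidableEq V] (B : Finset V) (v : V) : ℝ := if v ∈ B then 1/2 else 1

/-- The diagonal matrix `Q` with entries `1` on the interior and `1/2` on the boundary. -/
noncomputable def Qmat [Fintype V] [DecidableEq V] (B : Finset V) : Matrix V V ℝ :=
  Matrix.diagonal (qw B)

/-- `D^{1/2}`. -/
noncomputable def Dhalf [Fintype V] [DecidableEq V] (G : SimpleGraph V) [DecidableRel G.Adj]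
    (B : Finset V) : Matrix V V ℝ :=
  Matrix.diagonal fun v => Real.sqrt (deg G B v)

/-- `D^{-1/2}`. -/
noncomputable def Dinvhalf [Fintype V] [DecidableEq V] (G : SimpleGraph V) [DecidableRel G.Adj]
    (B : Finset V) : Matrix V V ℝ :=
  Matrix.diagonal fun v => (Real.sqrt (deg G B v))⁻¹

/-- The normalized reflected Neumann Laplacian `𝓛_R = D^{-1/2} L_R D^{-1/2}`. -/
noncomputable def NLR [Fintype V] [DecidableEq V] (G : SimpleGraph V) [DecidableRel G.Adj]
    (B : Finset V) : Matrix V V ℝ :=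
  Dinvhalf G B * LR G B * Dinvhalf G B

/-- `Q^{1/2}`. -/
noncomputable def Qhalf [Fintype V] [DecidableEq V] (B : Finset V) : Matrix V V ℝ :=
  Matrix.diagonal fun v => Real.sqrt (qw B v)

/-- `Q^{-1/2}`. -/
noncomputable def Qinvhalf [Fintype V] [DecidableEq V] (B : Finset V) : Matrix V V ℝ :=
  Matrix.diagonal fun v => (Real.sqrt (qw B v))⁻¹

/-- The first nontrivial eigenvalue `λ_R` of `𝓛_R`: the infimum of the Rayleigh quotients
`xᵀ (Q^{1/2} 𝓛_R Q^{-1/2}) x / xᵀx` over nonzero `x` with `xᵀ D^{1/2} Q^{1/2} 1 = 0`. -/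
noncomputable def lambdaR [Fintype V] [DecidableEq V] (G : SimpleGraph V) [DecidableRel G.Adj]
    (B : Finset V) : ℝ :=
  sInf {r : ℝ | ∃ x : V → ℝ, x ≠ 0 ∧
    x ⬝ᵥ ((Dhalf G B * Qhalf B) *ᵥ fun _ => 1) = 0 ∧
    r = x ⬝ᵥ ((Qhalf B * NLR G B * Qinvhalf B) *ᵥ x) / (x ⬝ᵥ x)}

/-- `|E(U,W)|`: the number of edges of `G` with one endpoint in `U` and one in `W`. -/
def ecount [Fintype V] [DecidableEq V] (G : SimpleGraph V) [DecidableRel G.Adj]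
    (U W : Finset V) : ℕ :=
  (G.edgeFinset.filter fun e => ∃ u ∈ U, ∃ w ∈ W, e = s(u, w)).card

/-- The measure `m(U,W) = |E(U,W)| - (1/2)|E(U ∩ ∂V, W ∩ ∂V)|`, where `B = ∂V`. -/
noncomputable def mMeas [Fintype V] [DecidableEq V] (G : SimpleGraph V) [DecidableRel G.Adj]
    (B : Finset V) (U W : Finset V) : ℝ :=
  (ecount G U W : ℝ) - (1/2) * (ecount G (U ∩ B) (W ∩ B) : ℝ)

/-- The volume `vol(U) = Σ_{u ∈ U} m({u}, V)`. -/
noncomputable def vol [Fintype V] [DecidableEq V] (G : SimpleGraph V) [DecidableRel G.Adj]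
    (B : Finset V) (U : Finset V) : ℝ :=
  ∑ u ∈ U, mMeas G B {u} Finset.univ

/-- The Cheeger constant `h_R`: the infimum over nonempty proper subsets `S ⊆ V` of
`m(S, V∖S) / min(vol S, vol (V∖S))`. -/
noncomputable def cheegerR [Fintype V] [DecidableEq V] (G : SimpleGraph V) [DecidableRel G.Adj]
    (B : Finset V) : ℝ :=
  sInf {r : ℝ | ∃ S : Finset V, S.Nonempty ∧ S ≠ Finset.univ ∧
    r = mMeas G B S Sᶜ / min (vol G B S) (vol G B Sᶜ)}

end RN

namespace WeightedGraph

variable {V : Type*} [Fintype V]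

noncomputable def wdeg (w : V → V → ℝ) (v : V) : ℝ := ∑ u, w v u

noncomputable def wvol (w : V → V → ℝ) (S : Finset V) : ℝ := ∑ v ∈ S, wdeg w v

noncomputable def cut [DecidableEq V] (w : V → V → ℝ) (S : Finset V) : ℝ :=
  ∑ u ∈ S, ∑ v ∈ Sᶜ, w u v

noncomputable def dirichlet (w : V → V → ℝ) (f : V → ℝ) : ℝ :=
  ∑ u, ∑ v, w u v * (f u - f v) ^ 2

noncomputable def totalVariation (w : V → V → ℝ) (φ : V → ℝ) : ℝ :=
  ∑ u, ∑ v, w u v * |φ u - φ v|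

variable {w : V → V → ℝ}

lemma wdeg_nonneg (hw : ∀ u v, 0 ≤ w u v) (v : V) : 0 ≤ wdeg w v :=
  sum_nonneg fun u _ => hw v u

lemma wvol_nonneg (hw : ∀ u v, 0 ≤ w u v) (S : Finset V) : 0 ≤ wvol w S :=
  sum_nonneg fun v _ => wdeg_nonneg hw v

lemma wvol_mono (hw : ∀ u v, 0 ≤ w u v) {S T : Finset V} (hST : S ⊆ T) :
    wvol w S ≤ wvol w T :=
  sum_le_sum_of_subset_of_nonneg hST fun v _ _ => wdeg_nonneg hw v

lemma wvol_add_wvol_compl [DecidableEq V] (S : Finset V) :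
    wvol w S + wvol w Sᶜ = wvol w univ :=
  sum_add_sum_compl S _

lemma cut_nonneg [DecidableEq V] (hw : ∀ u v, 0 ≤ w u v) (S : Finset V) : 0 ≤ cut w S :=
  sum_nonneg fun u _ => sum_nonneg fun v _ => hw u v

lemma dirichlet_nonneg (hw : ∀ u v, 0 ≤ w u v) (f : V → ℝ) : 0 ≤ dirichlet w f :=
  sum_nonneg fun u _ => sum_nonneg fun v _ => mul_nonneg (hw u v) (sq_nonneg _)

lemma sum_sum_mul_left (F : V → ℝ) : ∑ u, ∑ v, w u v * F u = ∑ u, wdeg w u * F u := by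
  simp only [wdeg, sum_mul]

lemma sum_sum_mul_right (hsymm : ∀ u v, w u v = w v u) (F : V → ℝ) :
    ∑ u, ∑ v, w u v * F v = ∑ v, wdeg w v * F v := by
  rw [sum_comm]
  simp only [wdeg, sum_mul, hsymm]

lemma dirichlet_eq (hsymm : ∀ u v, w u v = w v u) (f : V → ℝ) :
    dirichlet w f = 2 * (∑ v, wdeg w v * f v ^ 2 - ∑ u, ∑ v, w u v * (f u * f v)) := by
  have hexp : ∀ u v, w u v * (f u - f v) ^ 2
      = w u v * f u ^ 2 + w u v * f v ^ 2 - 2 * (w u v * (f u * f v)) := fun u v => by ring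
  simp only [dirichlet, hexp, sum_sub_distrib, sum_add_distrib, ← mul_sum,
    sum_sum_mul_left, sum_sum_mul_right hsymm]
  ring

lemma dotProduct_laplacian_mulVec [DecidableEq V] (hsymm : ∀ u v, w u v = w v u)
    (f : V → ℝ) : f ⬝ᵥ ((diagonal (wdeg w) - of w) *ᵥ f) = dirichlet w f / 2 := by
  rw [dirichlet_eq hsymm, mul_div_cancel_left₀ _ two_ne_zero, sub_mulVec, dotProduct_sub]
  congr 1
  · simp only [dotProduct, mulVec_diagonal]
    exact sum_congr rfl fun v _ => by ring
  · simp only [dotProduct, mulVec, of_apply, mul_sum]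
    exact sum_congr rfl fun u _ => sum_congr rfl fun v _ => by ring

lemma totalVariation_indicator [DecidableEq V] (hsymm : ∀ u v, w u v = w v u)
    (S : Finset V) : totalVariation w (fun v => if v ∈ S then 1 else 0) = 2 * cut w S := by
  have hrow : ∀ (T : Finset V) (c : ℝ) (u : V), (∀ v, |c - if v ∈ S then 1 else 0| =
      if v ∈ T then 1 else 0) → ∑ v, w u v * |c - if v ∈ S then 1 else 0| = ∑ v ∈ T, w u v :=
    fun T c u hc => by simp only [hc, mul_ite, mul_one, mul_zero, sum_ite_mem, univ_inter]
  have hin : ∀ u ∈ S, ∑ v, w u v * |(if u ∈ S then 1 else 0) - if v ∈ S then 1 else 0|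
      = ∑ v ∈ Sᶜ, w u v := fun u hu => by
    simp only [hu, if_true]
    exact hrow Sᶜ 1 u fun v => by by_cases hv : v ∈ S <;> simp [hv]
  have hout : ∀ u ∈ Sᶜ, ∑ v, w u v * |(if u ∈ S then 1 else 0) - if v ∈ S then 1 else 0|
      = ∑ v ∈ S, w u v := fun u hu => by
    simp only [mem_compl.mp hu, if_false]
    exact hrow S 0 u fun v => by by_cases hv : v ∈ S <;> simp [hv]
  have hswap : ∑ u ∈ Sᶜ, ∑ v ∈ S, w u v = cut w S := by
    rw [cut, sum_comm]; simp only [hsymm]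
  rw [totalVariation, ← sum_add_sum_compl S, sum_congr rfl hin, sum_congr rfl hout, hswap, cut]
  ring

lemma totalVariation_eq_sub_indicator_add_cut [DecidableEq V] (hsymm : ∀ u v, w u v = w v u)
    {φ : V → ℝ} {S : Finset V} {m : ℝ} (hm : 0 ≤ m) (hmin : ∀ v ∈ S, m ≤ φ v)
    (hoff : ∀ v ∉ S, φ v = 0) :
    totalVariation w φ
      = totalVariation w (fun v => φ v - m * if v ∈ S then 1 else 0) + 2 * m * cut w S := by
  have hpt : ∀ u v, |φ u - φ v| = |(φ u - m * if u ∈ S then 1 else 0) -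
      (φ v - m * if v ∈ S then 1 else 0)| + m * |(if u ∈ S then 1 else 0) -
      if v ∈ S then 1 else 0| := fun u v => by
    by_cases hu : u ∈ S <;> by_cases hv : v ∈ S
    · simp [hu, hv]
    · simp [hu, hv, hoff v hv, abs_of_nonneg (hm.trans (hmin u hu)),
        abs_of_nonneg (sub_nonneg.mpr (hmin u hu))]
    · simp [hu, hv, hoff u hu, abs_of_nonneg (hm.trans (hmin v hv)), abs_sub_comm m,
        abs_of_nonneg (sub_nonneg.mpr (hmin v hv))]
    · simp [hu, hv, hoff u hu, hoff v hv]
  rw [mul_assoc, mul_left_comm, ← totalVariation_indicator hsymm, totalVariation, totalVariation,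
    totalVariation, mul_sum, ← sum_add_distrib]
  refine sum_congr rfl fun u _ => ?_
  rw [mul_sum, ← sum_add_distrib]
  exact sum_congr rfl fun v _ => by rw [hpt]; ring

/-- Co-area inequality. Peeling off the bottom level set of `φ` removes a vertex from the support
and, by the cut hypothesis, lowers the total variation at least as much as `2 h` times the mass. -/
lemma two_mul_sum_le_totalVariation [DecidableEq V] (hsymm : ∀ u v, w u v = w v u)
    (hw : ∀ u v, 0 ≤ w u v) {h : ℝ}
    (hcut : ∀ S, h * min (wvol w S) (wvol w Sᶜ) ≤ cut w S) (φ : V → ℝ) (hφ : ∀ v, 0 ≤ φ v)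
    (hsupp : 2 * wvol w {v | φ v ≠ 0} ≤ wvol w univ) :
    2 * h * ∑ v, wdeg w v * φ v ≤ totalVariation w φ := by
  obtain ⟨n, hn⟩ : ∃ n, #{v | φ v ≠ 0} = n := ⟨_, rfl⟩
  induction n using Nat.strong_induction_on generalizing φ with
  | _ n ih =>
  set S : Finset V := {v | φ v ≠ 0}
  have hoff : ∀ v ∉ S, φ v = 0 := fun v hv => by simpa [S] using hv
  rcases S.eq_empty_or_nonempty with hempty | hne
  · have hφ0 : ∀ v, φ v = 0 := fun v => hoff v (hempty ▸ notMem_empty v)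
    simp [hφ0, totalVariation]
  obtain ⟨v₀, hv₀, hmin⟩ := S.exists_min_image φ hne
  set m := φ v₀
  set ψ : V → ℝ := fun v => φ v - m * if v ∈ S then 1 else 0
  have hψ : ∀ v, 0 ≤ ψ v := fun v => by
    by_cases hv : v ∈ S
    · simpa [ψ, hv] using hmin v hv
    · simp [ψ, hv, hoff v hv]
  have hsuppψ : ({v | ψ v ≠ 0} : Finset V) ⊆ S.erase v₀ := fun v hv => by
    by_cases hvS : v ∈ S
    · refine mem_erase.mpr ⟨?_, hvS⟩
      rintro rfl
      simp [ψ, hvS, m] at hv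
    · simp [ψ, hvS, hoff v hvS] at hv
  have hψbound := ih _ ((card_le_card hsuppψ).trans_lt (hn ▸ card_erase_lt_of_mem hv₀)) ψ hψ
    (le_trans (by gcongr; exact wvol_mono hw (hsuppψ.trans (erase_subset v₀ S))) hsupp) rfl
  have hmass : ∑ v, wdeg w v * φ v = ∑ v, wdeg w v * ψ v + m * wvol w S := by
    simp only [ψ, mul_sub, sum_sub_distrib, mul_ite, mul_one, mul_zero, wvol, mul_sum]
    rw [← sum_filter, filter_mem_eq_inter, univ_inter]
    simp only [mul_comm m]
    ring
  have hcutS : h * wvol w S ≤ cut w S := by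
    have := wvol_add_wvol_compl (w := w) S
    rw [← min_eq_left (by linarith : wvol w S ≤ wvol w Sᶜ)]
    exact hcut S
  rw [hmass, totalVariation_eq_sub_indicator_add_cut hsymm (hφ v₀) hmin hoff]
  nlinarith [mul_le_mul_of_nonneg_left hcutS (hφ v₀)]

lemma totalVariation_sq_sq_le (hsymm : ∀ u v, w u v = w v u) (hw : ∀ u v, 0 ≤ w u v)
    (g : V → ℝ) (hg : ∀ v, 0 ≤ g v) :
    totalVariation w (fun v => g v ^ 2) ^ 2 ≤ dirichlet w g * (4 * ∑ v, wdeg w v * g v ^ 2) := by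
  have hplus : ∑ u, ∑ v, w u v * (g u + g v) ^ 2 ≤ 4 * ∑ v, wdeg w v * g v ^ 2 := by
    calc ∑ u, ∑ v, w u v * (g u + g v) ^ 2
        ≤ ∑ u, ∑ v, (w u v * (2 * g u ^ 2) + w u v * (2 * g v ^ 2)) := by
          gcongr with u _ v _
          nlinarith [hw u v, mul_nonneg (hw u v) (sq_nonneg (g u - g v))]
      _ = 4 * ∑ v, wdeg w v * g v ^ 2 := by
          simp only [sum_add_distrib, sum_sum_mul_left, sum_sum_mul_right hsymm, ← mul_sum,
            mul_left_comm _ (2 : ℝ)]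
          ring
  have hcs := sum_sq_le_sum_mul_sum_of_sq_le_mul (univ : Finset (V × V))
    (r := fun p => w p.1 p.2 * |g p.1 ^ 2 - g p.2 ^ 2|)
    (f := fun p => w p.1 p.2 * (g p.1 - g p.2) ^ 2) (g := fun p => w p.1 p.2 * (g p.1 + g p.2) ^ 2)
    (fun p _ => mul_nonneg (hw _ _) (sq_nonneg _)) (fun p _ => mul_nonneg (hw _ _) (sq_nonneg _))
    (fun p _ => le_of_eq <| by
      rw [show g p.1 ^ 2 - g p.2 ^ 2 = (g p.1 - g p.2) * (g p.1 + g p.2) by ring, abs_mul,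
        abs_of_nonneg (add_nonneg (hg p.1) (hg p.2)), mul_pow, mul_pow, sq_abs]
      ring)
  simp only [Fintype.sum_prod_type] at hcs
  exact hcs.trans (mul_le_mul_of_nonneg_left hplus (dirichlet_nonneg hw g))

lemma sq_mul_sum_le_dirichlet_of_nonneg [DecidableEq V] (hsymm : ∀ u v, w u v = w v u)
    (hw : ∀ u v, 0 ≤ w u v) {h : ℝ} (hh : 0 ≤ h)
    (hcut : ∀ S, h * min (wvol w S) (wvol w Sᶜ) ≤ cut w S) (g : V → ℝ) (hg : ∀ v, 0 ≤ g v)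
    (hsupp : 2 * wvol w {v | g v ≠ 0} ≤ wvol w univ) :
    h ^ 2 * ∑ v, wdeg w v * g v ^ 2 ≤ dirichlet w g := by
  set T := ∑ v, wdeg w v * g v ^ 2
  have hT : 0 ≤ T := sum_nonneg fun v _ => mul_nonneg (wdeg_nonneg hw v) (sq_nonneg _)
  have hcoarea := two_mul_sum_le_totalVariation hsymm hw hcut (fun v => g v ^ 2)
    (fun v => sq_nonneg _) (by simpa only [ne_eq, pow_eq_zero_iff two_ne_zero] using hsupp)
  have hsq : (2 * h * T) ^ 2 ≤ dirichlet w g * (4 * T) :=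
    (pow_le_pow_left₀ (by positivity) hcoarea 2).trans (totalVariation_sq_sq_le hsymm hw g hg)
  rcases hT.eq_or_lt with hT0 | hTpos
  · rw [← hT0, mul_zero]; exact dirichlet_nonneg hw g
  · nlinarith

lemma exists_median (μ : V → ℝ) (hμ : ∀ v, 0 ≤ μ v) (f : V → ℝ) :
    ∃ c, 2 * ∑ v ∈ {v | c < f v}, μ v ≤ ∑ v, μ v ∧ 2 * ∑ v ∈ {v | f v < c}, μ v ≤ ∑ v, μ v := by
  have htotal : 0 ≤ ∑ v, μ v := sum_nonneg fun v _ => hμ v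
  -- the extra level `0` keeps `A` nonempty when `V` is empty
  set A := insert 0 (univ.image f)
  have hfA : ∀ v, f v ∈ A := fun v => mem_insert_of_mem (mem_image_of_mem f (mem_univ v))
  set C := A.filter fun t => 2 * ∑ v ∈ {v | t < f v}, μ v ≤ ∑ v, μ v
  have htop : A.max' (insert_nonempty _ _) ∈ C := by
    refine mem_filter.mpr ⟨max'_mem _ _, ?_⟩
    have hempty : ({v | A.max' (insert_nonempty _ _) < f v} : Finset V) = ∅ :=
      filter_eq_empty_iff.mpr fun v _ => not_lt.mpr (le_max' A _ (hfA v))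
    rw [hempty, sum_empty]
    linarith
  refine ⟨C.min' ⟨_, htop⟩, (mem_filter.mp (min'_mem C _)).2, ?_⟩
  rcases (({v | f v < C.min' ⟨_, htop⟩} : Finset V)).eq_empty_or_nonempty with hlow | hlow
  · simpa [hlow] using htotal
  obtain ⟨v₀, hv₀, hmax⟩ := exists_max_image _ f hlow
  have hv₀C : f v₀ ∉ C := fun hC => (mem_filter.mp hv₀).2.not_ge (min'_le C _ hC)
  have hbig : ∑ v, μ v < 2 * ∑ v ∈ {v | f v₀ < f v}, μ v := by
    simpa [C, hfA v₀] using hv₀C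
  have hsub : ({v | f v < C.min' ⟨_, htop⟩} : Finset V) ⊆ ({v | ¬f v₀ < f v} : Finset V) :=
    fun v hv => by simpa using hmax v hv
  have hcompl := sum_filter_add_sum_filter_not univ (fun v => f v₀ < f v) μ
  have hmono := sum_le_sum_of_subset_of_nonneg hsub fun v _ _ => hμ v
  linarith

lemma posPart_sub_sq_add_negPart_sub_sq_le (a b : ℝ) :
    (a⁺ - b⁺) ^ 2 + (a⁻ - b⁻) ^ 2 ≤ (a - b) ^ 2 := by
  rcases le_total 0 a with ha | ha <;> rcases le_total 0 b with hb | hb <;>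
    simp [ha, hb] <;> nlinarith

lemma sq_eq_posPart_sq_add_negPart_sq (a : ℝ) : a ^ 2 = a⁺ ^ 2 + a⁻ ^ 2 := by
  rcases le_total 0 a with ha | ha <;> simp [ha]

theorem sq_mul_sum_le_dirichlet [DecidableEq V] (hsymm : ∀ u v, w u v = w v u)
    (hw : ∀ u v, 0 ≤ w u v) {h : ℝ} (hh : 0 ≤ h)
    (hcut : ∀ S, h * min (wvol w S) (wvol w Sᶜ) ≤ cut w S) (f : V → ℝ)
    (hf : ∑ v, wdeg w v * f v = 0) :
    h ^ 2 * ∑ v, wdeg w v * f v ^ 2 ≤ dirichlet w f := by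
  obtain ⟨c, hup, hdown⟩ := exists_median (wdeg w) (wdeg_nonneg hw) f
  set gp : V → ℝ := fun v => (f v - c)⁺
  set gm : V → ℝ := fun v => (f v - c)⁻
  have hgp := sq_mul_sum_le_dirichlet_of_nonneg hsymm hw hh hcut gp (fun v => posPart_nonneg _)
    (by simpa [gp, wvol, sub_pos] using hup)
  have hgm := sq_mul_sum_le_dirichlet_of_nonneg hsymm hw hh hcut gm (fun v => negPart_nonneg _)
    (by simpa [gm, wvol, sub_neg] using hdown)
  have hmass : ∑ v, wdeg w v * f v ^ 2 ≤ ∑ v, wdeg w v * gp v ^ 2 + ∑ v, wdeg w v * gm v ^ 2 := by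
    have hshift : ∑ v, wdeg w v * (f v - c) ^ 2
        = ∑ v, wdeg w v * f v ^ 2 - 2 * c * ∑ v, wdeg w v * f v + c ^ 2 * ∑ v, wdeg w v := by
      simp only [mul_sum, ← sum_sub_distrib, ← sum_add_distrib]
      exact sum_congr rfl fun v _ => by ring
    have hsplit : ∑ v, wdeg w v * (f v - c) ^ 2
        = ∑ v, wdeg w v * gp v ^ 2 + ∑ v, wdeg w v * gm v ^ 2 := by
      rw [← sum_add_distrib]
      exact sum_congr rfl fun v _ => by rw [sq_eq_posPart_sq_add_negPart_sq (f v - c)]; ring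
    have hvol : 0 ≤ ∑ v, wdeg w v := sum_nonneg fun v _ => wdeg_nonneg hw v
    rw [hf] at hshift
    nlinarith [mul_nonneg (sq_nonneg c) hvol]
  have henergy : dirichlet w gp + dirichlet w gm ≤ dirichlet w f := by
    simp only [dirichlet, ← sum_add_distrib]
    gcongr with u _ v _
    rw [← mul_add]
    refine mul_le_mul_of_nonneg_left ?_ (hw u v)
    simpa using posPart_sub_sq_add_negPart_sub_sq_le (f u - c) (f v - c)
  calc h ^ 2 * ∑ v, wdeg w v * f v ^ 2
      ≤ h ^ 2 * ∑ v, wdeg w v * gp v ^ 2 + h ^ 2 * ∑ v, wdeg w v * gm v ^ 2 := by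
        rw [← mul_add]; gcongr
    _ ≤ dirichlet w f := by linarith

end WeightedGraph

lemma dotProduct_mul_mulVec_diagonal_inv {n R : Type*} [Fintype n] [DecidableEq n] [Field R]
    (d f : n → R) (hd : ∀ i, d i ≠ 0) (K : Matrix n n R) :
    (d * f) ⬝ᵥ ((diagonal d⁻¹ * K * diagonal d⁻¹) *ᵥ (d * f)) = f ⬝ᵥ (K *ᵥ f) := by
  have hright : diagonal d⁻¹ *ᵥ (d * f) = f :=
    funext fun i => by simp [mulVec_diagonal, hd i]
  have hleft : (d * f) ᵥ* diagonal d⁻¹ = f :=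
    funext fun i => by simp only [vecMul_diagonal, Pi.mul_apply, Pi.inv_apply]; field_simp [hd i]
  rw [← mulVec_mulVec, ← mulVec_mulVec, hright, dotProduct_mulVec, hleft]

namespace RN

open WeightedGraph

variable {V : Type*} [Fintype V] [DecidableEq V] (G : SimpleGraph V) [DecidableRel G.Adj]
  (B : Finset V)

noncomputable def edgeWeight (u v : V) : ℝ :=
  (if u ∈ B ∧ v ∈ B then 1 / 2 else 1) * adjMat G u v

lemma adjMat_nonneg (u v : V) : 0 ≤ adjMat G u v := by
  simp only [adjMat, of_apply]; split_ifs <;> norm_num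

lemma adjMat_comm (u v : V) : adjMat G u v = adjMat G v u := by
  simp only [adjMat, of_apply, G.adj_comm]

lemma edgeWeight_comm (u v : V) : edgeWeight G B u v = edgeWeight G B v u := by
  simp only [edgeWeight, adjMat_comm G u v, and_comm]

lemma edgeWeight_nonneg (u v : V) : 0 ≤ edgeWeight G B u v :=
  mul_nonneg (by split_ifs <;> norm_num) (adjMat_nonneg G u v)

omit [Fintype V] in
lemma qw_pos (v : V) : 0 < qw B v := by
  unfold qw; split_ifs <;> norm_num

lemma qw_mul_reflAdj (u v : V) : qw B u * reflAdj G B u v = edgeWeight G B u v := by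
  by_cases hu : u ∈ B <;> by_cases hv : v ∈ B <;> simp [qw, reflAdj, edgeWeight, hu, hv]

lemma qw_mul_deg (v : V) : qw B v * deg G B v = wdeg (edgeWeight G B) v := by
  simp only [deg, wdeg, mul_sum, qw_mul_reflAdj]

lemma deg_nonneg (v : V) : 0 ≤ deg G B v :=
  sum_nonneg fun w _ => mul_nonneg (by split_ifs <;> norm_num) (adjMat_nonneg G v w)

lemma Qmat_mul_LR :
    Qmat B * LR G B = diagonal (wdeg (edgeWeight G B)) - of (edgeWeight G B) := by
  ext u v
  rw [Qmat, diagonal_mul, LR, Dmat, Matrix.sub_apply, mul_sub, Matrix.sub_apply, of_apply,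
    qw_mul_reflAdj]
  by_cases huv : u = v
  · subst huv; simp [qw_mul_deg]
  · simp [huv]

lemma ecount_eq_sum_adjMat {U W : Finset V} (hUW : G.IsIndepSet ↑(U ∩ W)) :
    (ecount G U W : ℝ) = ∑ u ∈ U, ∑ w ∈ W, adjMat G u w := by
  have himage : G.edgeFinset.filter (fun e => ∃ u ∈ U, ∃ w ∈ W, e = s(u, w))
      = ((U ×ˢ W).filter fun p => G.Adj p.1 p.2).image fun p => s(p.1, p.2) := by
    ext e
    simp only [mem_filter, mem_image, mem_product, SimpleGraph.mem_edgeFinset, Prod.exists]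
    constructor
    · rintro ⟨he, u, hu, w, hw, rfl⟩
      exact ⟨u, w, ⟨⟨hu, hw⟩, he⟩, rfl⟩
    · rintro ⟨u, w, ⟨⟨hu, hw⟩, huw⟩, rfl⟩
      exact ⟨huw, u, hu, w, hw, rfl⟩
  have hinj :
      Set.InjOn (fun p : V × V => s(p.1, p.2)) ↑((U ×ˢ W).filter fun p => G.Adj p.1 p.2) := by
    rintro ⟨a₁, a₂⟩ ha ⟨b₁, b₂⟩ hb hab
    simp only [mem_coe, mem_filter, mem_product] at ha hb
    rcases Sym2.eq_iff.mp hab with ⟨rfl, rfl⟩ | ⟨rfl, rfl⟩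
    · rfl
    · exact absurd ha.2 (hUW (mem_coe.mpr (mem_inter.mpr ⟨ha.1.1, hb.1.2⟩))
        (mem_coe.mpr (mem_inter.mpr ⟨hb.1.1, ha.1.2⟩)) (G.ne_of_adj ha.2))
  rw [ecount, himage, card_image_of_injOn hinj, card_filter, sum_product]
  push_cast
  simp only [adjMat, of_apply]

lemma mMeas_eq_sum_edgeWeight {U W : Finset V} (hUW : G.IsIndepSet ↑(U ∩ W)) :
    mMeas G B U W = ∑ u ∈ U, ∑ w ∈ W, edgeWeight G B u w := by
  have hUWB : G.IsIndepSet ↑(U ∩ B ∩ (W ∩ B)) :=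
    hUW.mono (by gcongr <;> exact inter_subset_left)
  have hB : ∑ u ∈ U ∩ B, ∑ w ∈ W ∩ B, adjMat G u w
      = ∑ u ∈ U, ∑ w ∈ W, if u ∈ B ∧ w ∈ B then adjMat G u w else 0 := by
    rw [← filter_mem_eq_inter, sum_filter]
    refine sum_congr rfl fun u _ => ?_
    by_cases hu : u ∈ B
    · simp only [hu, true_and, if_true]
      rw [← filter_mem_eq_inter, sum_filter]
    · simp [hu]
  rw [mMeas, ecount_eq_sum_adjMat G hUW, ecount_eq_sum_adjMat G hUWB, hB, mul_sum,
    ← sum_sub_distrib]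
  refine sum_congr rfl fun u _ => ?_
  rw [mul_sum, ← sum_sub_distrib]
  refine sum_congr rfl fun w _ => ?_
  by_cases hu : u ∈ B <;> by_cases hw : w ∈ B <;> simp [edgeWeight, hu, hw]
  ring

lemma vol_eq_wvol (S : Finset V) : vol G B S = wvol (edgeWeight G B) S := by
  refine sum_congr rfl fun u _ => ?_
  rw [mMeas_eq_sum_edgeWeight G B (by simp), sum_singleton, wdeg]

lemma mMeas_compl_eq_cut (S : Finset V) : mMeas G B S Sᶜ = cut (edgeWeight G B) S :=
  mMeas_eq_sum_edgeWeight G B (by simp)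

lemma cheeger_ratio_nonneg (S : Finset V) :
    0 ≤ mMeas G B S Sᶜ / min (vol G B S) (vol G B Sᶜ) := by
  rw [mMeas_compl_eq_cut, vol_eq_wvol, vol_eq_wvol]
  have hw := edgeWeight_nonneg G B
  exact div_nonneg (cut_nonneg hw S) (le_min (wvol_nonneg hw S) (wvol_nonneg hw Sᶜ))

lemma cheegerR_nonneg : 0 ≤ cheegerR G B :=
  Real.sInf_nonneg <| by rintro r ⟨S, -, -, rfl⟩; exact cheeger_ratio_nonneg G B S

lemma cheegerR_mul_min_le_cut (S : Finset V) :
    cheegerR G B * min (wvol (edgeWeight G B) S) (wvol (edgeWeight G B) Sᶜ)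
      ≤ cut (edgeWeight G B) S := by
  have hw := edgeWeight_nonneg G B
  rcases (le_min (wvol_nonneg hw S) (wvol_nonneg hw Sᶜ)).eq_or_lt with hmin | hmin
  · rw [← hmin, mul_zero]; exact cut_nonneg hw S
  have hS : S.Nonempty := nonempty_iff_ne_empty.mpr fun h => by simp [h, wvol] at hmin
  have hSu : S ≠ univ := fun h => by simp [h, wvol] at hmin
  have hle : cheegerR G B ≤ mMeas G B S Sᶜ / min (vol G B S) (vol G B Sᶜ) :=
    csInf_le ⟨0, by rintro r ⟨S, -, -, rfl⟩; exact cheeger_ratio_nonneg G B S⟩ ⟨S, hS, hSu, rfl⟩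
  rw [mMeas_compl_eq_cut, vol_eq_wvol, vol_eq_wvol, le_div_iff₀ hmin] at hle
  exact hle

noncomputable def dqRoot (v : V) : ℝ := √(deg G B v) * √(qw B v)

lemma Dhalf_mul_Qhalf_mulVec_one : (Dhalf G B * Qhalf B) *ᵥ (fun _ => 1) = dqRoot G B := by
  ext v
  simp [Dhalf, Qhalf, dqRoot, mulVec_diagonal]

lemma dqRoot_sq (v : V) : dqRoot G B v ^ 2 = wdeg (edgeWeight G B) v := by
  rw [dqRoot, mul_pow, Real.sq_sqrt (deg_nonneg G B v), Real.sq_sqrt (qw_pos B v).le, mul_comm,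
    qw_mul_deg]

lemma dqRoot_ne_zero (hD : ∀ v, 0 < deg G B v) (v : V) : dqRoot G B v ≠ 0 :=
  mul_ne_zero (Real.sqrt_pos.mpr (hD v)).ne' (Real.sqrt_pos.mpr (qw_pos B v)).ne'

lemma Qhalf_mul_NLR_mul_Qinvhalf : Qhalf B * NLR G B * Qinvhalf B
    = diagonal (dqRoot G B)⁻¹ * (Qmat B * LR G B) * diagonal (dqRoot G B)⁻¹ := by
  ext u v
  have hq : √(qw B u) * √(qw B u) = qw B u := Real.mul_self_sqrt (qw_pos B u).le
  have hq0 : √(qw B u) ≠ 0 := (Real.sqrt_pos.mpr (qw_pos B u)).ne'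
  have hq' : (√(qw B u))⁻¹ * qw B u = √(qw B u) := by
    rw [inv_mul_eq_iff_eq_mul₀ hq0, hq]
  simp only [NLR, Qhalf, Qinvhalf, Dinvhalf, Qmat, dqRoot, diagonal_mul, mul_diagonal,
    Pi.inv_apply, mul_inv]
  linear_combination (-(√(deg G B u))⁻¹ * LR G B u v * (√(deg G B v))⁻¹ * (√(qw B v))⁻¹) * hq'

lemma exists_orthogonal_ne_zero (hD : ∀ v, 0 < deg G B v) {v w : V} (hvw : v ≠ w) :
    ∃ x : V → ℝ, x ≠ 0 ∧ x ⬝ᵥ ((Dhalf G B * Qhalf B) *ᵥ fun _ => 1) = 0 := by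
  refine ⟨Pi.single v (dqRoot G B w) - Pi.single w (dqRoot G B v), fun hx => ?_, ?_⟩
  · have := congrFun hx v
    simp [hvw, dqRoot_ne_zero G B hD w] at this
  · rw [Dhalf_mul_Qhalf_mulVec_one, sub_dotProduct, single_dotProduct, single_dotProduct]
    ring

lemma cheegerR_sq_div_two_le_rayleigh (hD : ∀ v, 0 < deg G B v) (x : V → ℝ) (hx : x ≠ 0)
    (horth : x ⬝ᵥ ((Dhalf G B * Qhalf B) *ᵥ fun _ => 1) = 0) :
    cheegerR G B ^ 2 / 2 ≤ x ⬝ᵥ ((Qhalf B * NLR G B * Qinvhalf B) *ᵥ x) / (x ⬝ᵥ x) := by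
  set f := x / dqRoot G B
  have hx_eq : x = dqRoot G B * f :=
    funext fun v => (mul_div_cancel₀ _ (dqRoot_ne_zero G B hD v)).symm
  have hnum : x ⬝ᵥ ((Qhalf B * NLR G B * Qinvhalf B) *ᵥ x) = dirichlet (edgeWeight G B) f / 2 := by
    rw [Qhalf_mul_NLR_mul_Qinvhalf, Qmat_mul_LR, hx_eq,
      dotProduct_mul_mulVec_diagonal_inv _ _ (dqRoot_ne_zero G B hD),
      dotProduct_laplacian_mulVec (edgeWeight_comm G B)]
  have hden : x ⬝ᵥ x = ∑ v, wdeg (edgeWeight G B) v * f v ^ 2 := by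
    rw [hx_eq]
    exact sum_congr rfl fun v _ => by rw [Pi.mul_apply, ← dqRoot_sq]; ring
  have hmean : ∑ v, wdeg (edgeWeight G B) v * f v = 0 := by
    rw [Dhalf_mul_Qhalf_mulVec_one, hx_eq] at horth
    rw [← horth]
    exact sum_congr rfl fun v _ => by rw [Pi.mul_apply, ← dqRoot_sq]; ring
  have hpos : 0 < x ⬝ᵥ x :=
    lt_of_le_of_ne (hden ▸ sum_nonneg fun v _ =>
      mul_nonneg (wdeg_nonneg (edgeWeight_nonneg G B) v) (sq_nonneg _))
      (Ne.symm (dotProduct_self_eq_zero.not.mpr hx))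
  rw [le_div_iff₀ hpos, hnum, hden]
  have := sq_mul_sum_le_dirichlet (edgeWeight_comm G B) (edgeWeight_nonneg G B)
    (cheegerR_nonneg G B) (cheegerR_mul_min_le_cut G B) f hmean
  linarith

lemma cheegerR_eq_zero_of_subsingleton [Subsingleton V] : cheegerR G B = 0 := by
  rw [cheegerR, Set.eq_empty_of_forall_notMem (s := {r : ℝ | _}), Real.sInf_empty]
  rintro r ⟨S, ⟨v, hv⟩, hSu, -⟩
  exact hSu (eq_univ_of_forall fun w => Subsingleton.elim v w ▸ hv)

end RN

open RN

theorem lambdaR_ge_cheegerR_sq_div_two_general {V : Type*} [Fintype V] [DecidableEq V]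
    (G : SimpleGraph V) [DecidableRel G.Adj] (B : Finset V)
    (hD : ∀ v, 0 < deg G B v) :
    lambdaR G B ≥ (cheegerR G B) ^ 2 / 2 := by
  rw [ge_iff_le, lambdaR]
  rcases subsingleton_or_nontrivial V with hV | hV
  · rw [cheegerR_eq_zero_of_subsingleton, zero_pow two_ne_zero, zero_div]
    refine Real.sInf_nonneg ?_
    rintro r ⟨x, hx, horth, rfl⟩
    simpa [cheegerR_eq_zero_of_subsingleton] using
      cheegerR_sq_div_two_le_rayleigh G B hD x hx horth
  · obtain ⟨v, w, hvw⟩ := exists_pair_ne V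
    obtain ⟨x, hx, horth⟩ := exists_orthogonal_ne_zero G B hD hvw
    refine le_csInf ⟨_, x, hx, horth, rfl⟩ ?_
    rintro r ⟨x, hx, horth, rfl⟩
    exact cheegerR_sq_div_two_le_rayleigh G B hD x hx horth

/-- **Nontrivial direction of the Cheeger inequality.** For a finite simple graph `G` with
boundary `B ⊆ V` such that every diagonal entry of `D` is strictly positive and `vol(S) > 0`
for every nonempty `S ⊆ V`, the first nontrivial eigenvalue of the normalized reflected
Neumann Laplacian satisfies `λ_R ≥ h_R² / 2`. -/
theorem lambdaR_ge_cheegerR_sq_div_two {V : Type*} [Fintype V] [DecidableEq V]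
    (G : SimpleGraph V) [DecidableRel G.Adj] (B : Finset V)
    (hD : ∀ v, 0 < deg G B v)
    (hvol : ∀ S : Finset V, S.Nonempty → 0 < vol G B S) :
    lambdaR G B ≥ (cheegerR G B) ^ 2 / 2 :=
  lambdaR_ge_cheegerR_sq_div_two_general G B hD
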